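/- For every correlated equilibrium P^CE of a finite normal-form game Γ, there exists a correlated optimin P̄ such that π_i(P̄) ≥ Σ_{a∈A} P^CE(a) u_i(a) for every player i; moreover Σ_{a∈A} P̄(a) u_i(a) ≥ π_i(P̄) for every i, so P̄ also weakly improves every player's ordinary expected payoff relative to P^CE. -/

import Mathlib

open Finset

variable {I : Type*} [Fintype I] [DecidableEq I] [Nonempty I]
variable {A : I → Type*} [∀ i, Fintype (A i)] [∀ i, DecidableEq (A i)]
  [∀ i, Nonempty (A i)]

/-- The unnormalized gain of player `j` from switching to `b` after receiving
recommendation `r`:  `Σ_{a_{-j}} P(r, a_{-j}) · [u_j(b, a_{-j}) − u_j(r, a_{-j})]`. -/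
noncomputable def gain (u : I → (∀ i, A i) → ℝ) (P : (∀ i, A i) → ℝ)
    (j : I) (r b : A j) : ℝ :=
  ∑ a : ∀ i, A i,
    if a j = r then P a * (u j (Function.update a j b) - u j a) else 0

/-- `δ` is an admissible recommendation-contingent deviation profile for the opponents
of player `i`: each `δ j r` lies in `B_j^P(r) = {r} ∪ {b : gain > 0}`. -/
def Admissible (u : I → (∀ i, A i) → ℝ) (P : (∀ i, A i) → ℝ) (i : I)
    (δ : ∀ j, A j → A j) : Prop :=
  ∀ j, j ≠ i → ∀ r : A j, δ j r = r ∨ 0 < gain u P j r (δ j r)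

/-- The action profile `(a_i, δ_{-i}(a_{-i}))`. -/
def applyDev (i : I) (δ : ∀ j, A j → A j) (a : ∀ j, A j) : ∀ j, A j :=
  fun j => if j = i then a j else δ j (a j)

/-- Correlated optimin performance of player `i` at `P`:
`π_i(P) = min_{δ_{-i} ∈ B_{-i}^P} Σ_a P(a) u_i(a_i, δ_{-i}(a_{-i}))`. -/
noncomputable def perf (u : I → (∀ i, A i) → ℝ) (P : (∀ i, A i) → ℝ) (i : I) : ℝ :=
  sInf {x | ∃ δ : ∀ j, A j → A j, Admissible u P i δ ∧
    x = ∑ a : ∀ j, A j, P a * u i (applyDev i δ a)}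

/-- Correlated equilibrium: for every player `i` and all `r, b ∈ A_i`,
`Σ_{a_{-i}} P(r, a_{-i}) · [u_i(r, a_{-i}) − u_i(b, a_{-i})] ≥ 0`. -/
def IsCE (u : I → (∀ i, A i) → ℝ) (P : (∀ i, A i) → ℝ) : Prop :=
  ∀ i : I, ∀ r b : A i,
    0 ≤ ∑ a : ∀ j, A j,
      if a i = r then P a * (u i a - u i (Function.update a i b)) else 0

/-! ### auxiliary lemmas -/

lemma applyDev_id (i : I) (a : ∀ j, A j) : applyDev i (fun _ r => r) a = a := by
  funext j; simp [applyDev]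

lemma perfSet_finite (u : I → (∀ i, A i) → ℝ) (P : (∀ i, A i) → ℝ) (i : I) :
    {x | ∃ δ : ∀ j, A j → A j, Admissible u P i δ ∧
      x = ∑ a : ∀ j, A j, P a * u i (applyDev i δ a)}.Finite := by
  apply Set.Finite.subset (Set.finite_range
    (fun δ : ∀ j, A j → A j => ∑ a : ∀ j, A j, P a * u i (applyDev i δ a)))
  rintro x ⟨δ, -, rfl⟩
  exact ⟨δ, rfl⟩

lemma id_admissible (u : I → (∀ i, A i) → ℝ) (P : (∀ i, A i) → ℝ) (i : I) :
    Admissible u P i (fun _ r => r) := fun _ _ _ => Or.inl rfl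

lemma perf_le (u : I → (∀ i, A i) → ℝ) (P : (∀ i, A i) → ℝ) (i : I)
    {δ : ∀ j, A j → A j} (hδ : Admissible u P i δ) :
    perf u P i ≤ ∑ a : ∀ j, A j, P a * u i (applyDev i δ a) :=
  csInf_le (perfSet_finite u P i).bddBelow ⟨δ, hδ, rfl⟩

lemma perf_mem (u : I → (∀ i, A i) → ℝ) (P : (∀ i, A i) → ℝ) (i : I) :
    ∃ δ : ∀ j, A j → A j, Admissible u P i δ ∧
      perf u P i = ∑ a : ∀ j, A j, P a * u i (applyDev i δ a) := by
  have hne : {x | ∃ δ : ∀ j, A j → A j, Admissible u P i δ ∧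
      x = ∑ a : ∀ j, A j, P a * u i (applyDev i δ a)}.Nonempty :=
    ⟨_, ⟨fun _ r => r, id_admissible u P i, rfl⟩⟩
  exact Set.Nonempty.csInf_mem hne (perfSet_finite u P i)

lemma gain_nonpos_of_CE {u : I → (∀ i, A i) → ℝ} {P : (∀ i, A i) → ℝ}
    (hCE : IsCE u P) (j : I) (r b : A j) : gain u P j r b ≤ 0 := by
  have h2 := hCE j r b
  have h3 : gain u P j r b
      + (∑ a : ∀ k, A k, if a j = r then P a * (u j a - u j (Function.update a j b)) else 0) = 0 := by
    unfold gain
    rw [← Finset.sum_add_distrib]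
    apply Finset.sum_eq_zero
    intro a _
    by_cases hb : a j = r <;> simp [hb] <;> ring
  linarith

lemma perf_CE {u : I → (∀ i, A i) → ℝ} {P : (∀ i, A i) → ℝ}
    (hCE : IsCE u P) (i : I) : perf u P i = ∑ a : ∀ j, A j, P a * u i a := by
  obtain ⟨δ, hδ, heq⟩ := perf_mem u P i
  rw [heq]
  apply Finset.sum_congr rfl
  intro a _
  congr 1
  have hfix : applyDev i δ a = a := by
    funext j
    by_cases h : j = i
    · simp [applyDev, h]
    · rcases hδ j h (a j) with h1 | h1
      · simp [applyDev, h, h1]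
      · exact absurd h1 (not_lt.2 (gain_nonpos_of_CE hCE j (a j) (δ j (a j))))
  rw [hfix]

lemma continuous_gain (u : I → (∀ i, A i) → ℝ) (j : I) (r b : A j) :
    Continuous fun P : (∀ i, A i) → ℝ => gain u P j r b := by
  unfold gain
  apply continuous_finset_sum
  intro a _
  by_cases h : a j = r
  · simp only [h, if_true]
    exact (continuous_apply a).mul continuous_const
  · simp only [h, if_false]
    exact continuous_const

lemma continuous_gfun (u : I → (∀ i, A i) → ℝ) (i : I) (δ : ∀ j, A j → A j) :
    Continuous fun P : (∀ i, A i) → ℝ =>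
      ∑ a : ∀ j, A j, P a * u i (applyDev i δ a) :=
  continuous_finset_sum _ fun a _ => (continuous_apply a).mul continuous_const

lemma isOpen_admissible (u : I → (∀ i, A i) → ℝ) (i : I) (δ : ∀ j, A j → A j) :
    IsOpen {P : (∀ i, A i) → ℝ | Admissible u P i δ} := by
  have hset : {P : (∀ i, A i) → ℝ | Admissible u P i δ} =
      ⋂ j, ⋂ r : A j, {P | j ≠ i → (δ j r = r ∨ 0 < gain u P j r (δ j r))} := by
    ext P
    simp only [Set.mem_setOf_eq, Set.mem_iInter]
    exact ⟨fun h j r hj => h j hj r, fun h j hj r => h j r hj⟩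
  rw [hset]
  refine isOpen_iInter_of_finite fun j => isOpen_iInter_of_finite fun r => ?_
  by_cases hj : j = i
  · have : {P : (∀ i, A i) → ℝ | j ≠ i → (δ j r = r ∨ 0 < gain u P j r (δ j r))}
        = Set.univ := by
      ext P; simp [hj]
    rw [this]; exact isOpen_univ
  · by_cases hr : δ j r = r
    · have : {P : (∀ i, A i) → ℝ | j ≠ i → (δ j r = r ∨ 0 < gain u P j r (δ j r))}
          = Set.univ := by
        ext P; simp [hr]
      rw [this]; exact isOpen_univ
    · have : {P : (∀ i, A i) → ℝ | j ≠ i → (δ j r = r ∨ 0 < gain u P j r (δ j r))}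
          = {P | 0 < gain u P j r (δ j r)} := by
        ext P; simp [hj, hr]
      rw [this]
      exact isOpen_lt continuous_const (continuous_gain u j r (δ j r))

lemma isOpen_perf_lt (u : I → (∀ i, A i) → ℝ) (i : I) (c : ℝ) :
    IsOpen {P : (∀ i, A i) → ℝ | perf u P i < c} := by
  have hset : {P : (∀ i, A i) → ℝ | perf u P i < c} =
      ⋃ δ : ∀ j, A j → A j, ({P | Admissible u P i δ} ∩
        {P | (∑ a : ∀ j, A j, P a * u i (applyDev i δ a)) < c}) := by
    ext P
    constructor
    · intro h
      obtain ⟨δ, hδ, heq⟩ := perf_mem u P i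
      refine Set.mem_iUnion.2 ⟨δ, hδ, ?_⟩
      simp only [Set.mem_setOf_eq]
      rw [← heq]
      exact h
    · intro h
      obtain ⟨δ, hδ, hlt⟩ := Set.mem_iUnion.1 h
      exact lt_of_le_of_lt (perf_le u P i hδ) hlt
  rw [hset]
  exact isOpen_iUnion fun δ => (isOpen_admissible u i δ).inter
    (isOpen_lt (continuous_gfun u i δ) continuous_const)

lemma usc_perf (u : I → (∀ i, A i) → ℝ) (i : I) :
    UpperSemicontinuous fun P : (∀ i, A i) → ℝ => perf u P i := by
  rw [upperSemicontinuous_iff_isOpen_preimage]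
  intro y
  exact isOpen_perf_lt u i y

lemma exists_max_on_compact {X : Type*} [TopologicalSpace X] {K : Set X} (hK : IsCompact K)
    (hne : K.Nonempty) {f : X → ℝ} (hf : ∀ c : ℝ, IsOpen {x | f x < c}) :
    ∃ x ∈ K, ∀ y ∈ K, f y ≤ f x := by
  by_contra h
  push_neg at h
  have hcov : K ⊆ ⋃ y : K, {x | f x < f y.1} := by
    intro x hx
    obtain ⟨y, hy, hlt⟩ := h x hx
    exact Set.mem_iUnion.2 ⟨⟨y, hy⟩, hlt⟩
  obtain ⟨t, ht⟩ := hK.elim_finite_subcover _ (fun y : K => hf (f y.1)) hcov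
  obtain ⟨x0, hx0⟩ := hne
  have htne : t.Nonempty := by
    have h0 := ht hx0
    rw [Set.mem_iUnion₂] at h0
    obtain ⟨y, hy, -⟩ := h0
    exact ⟨y, hy⟩
  obtain ⟨y0, hy0t, hy0max⟩ := t.exists_max_image (fun y => f y.1) htne
  have hmem := ht y0.2
  rw [Set.mem_iUnion₂] at hmem
  obtain ⟨y, hyt, hlt⟩ := hmem
  exact absurd hlt (not_lt.2 (hy0max y hyt))

/-- for every correlated equilibrium `P^CE` there is a correlated
optimin `P̄` with `π_i(P̄) ≥ Σ_a P^CE(a) u_i(a)` for every player `i`; moreover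
`Σ_a P̄(a) u_i(a) ≥ π_i(P̄)` for every `i`, so `P̄` also weakly improves every
player's ordinary expected payoff relative to `P^CE`. -/
theorem exists_correlated_optimin_dominating_CE
    (u : I → (∀ i, A i) → ℝ) (PCE : (∀ i, A i) → ℝ)
    (hPCE : PCE ∈ stdSimplex ℝ (∀ i, A i)) (hCE : IsCE u PCE) :
    ∃ Pbar ∈ stdSimplex ℝ (∀ i, A i),
      (¬ ∃ Q ∈ stdSimplex ℝ (∀ i, A i),
        (∀ i : I, perf u Pbar i ≤ perf u Q i) ∧
        (∃ i : I, perf u Pbar i < perf u Q i)) ∧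
      (∀ i : I, (∑ a : ∀ j, A j, PCE a * u i a) ≤ perf u Pbar i) ∧
      (∀ i : I, perf u Pbar i ≤ ∑ a : ∀ j, A j, Pbar a * u i a) := by
  classical
  set K : Set ((∀ i, A i) → ℝ) :=
    stdSimplex ℝ (∀ i, A i) ∩ ⋂ i : I, {Q | perf u PCE i ≤ perf u Q i} with hKdef
  have hKcompact : IsCompact K :=
    (isCompact_stdSimplex ℝ (∀ i, A i)).inter_right
      (isClosed_iInter fun i => by
        have : {Q : (∀ i, A i) → ℝ | perf u PCE i ≤ perf u Q i}
            = {Q | perf u Q i < perf u PCE i}ᶜ := by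
          ext Q; simp [not_lt]
        rw [this]
        exact (isOpen_perf_lt u i _).isClosed_compl)
  have hPCEK : PCE ∈ K := ⟨hPCE, Set.mem_iInter.2 fun i => le_refl (perf u PCE i)⟩
  have hF : ∀ c : ℝ, IsOpen {Q : (∀ i, A i) → ℝ | (∑ i : I, perf u Q i) < c} := by
    intro c
    have husc : UpperSemicontinuous fun Q : (∀ i, A i) → ℝ => ∑ i : I, perf u Q i :=
      upperSemicontinuous_sum fun i _ => usc_perf u i
    exact husc.isOpen_preimage c
  obtain ⟨Pbar, hPbarK, hmax⟩ := exists_max_on_compact hKcompact ⟨PCE, hPCEK⟩ hF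
  refine ⟨Pbar, hPbarK.1, ?_, ?_, ?_⟩
  · rintro ⟨Q, hQ, hall, i0, hstrict⟩
    have hQK : Q ∈ K :=
      ⟨hQ, Set.mem_iInter.2 fun i =>
        le_trans (Set.mem_iInter.1 hPbarK.2 i) (hall i)⟩
    have h1 : (∑ i : I, perf u Q i) ≤ ∑ i : I, perf u Pbar i := hmax Q hQK
    have h2 : (∑ i : I, perf u Pbar i) < ∑ i : I, perf u Q i :=
      Finset.sum_lt_sum (fun i _ => hall i) ⟨i0, Finset.mem_univ _, hstrict⟩
    linarith
  · intro i
    have := Set.mem_iInter.1 hPbarK.2 i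
    rwa [perf_CE hCE i] at this
  · intro i
    have h := perf_le u Pbar i (id_admissible u Pbar i)
    simpa [applyDev_id] using h
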